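/- Let d ≥ 1, α ∈ (0,2) with α < d, κ > 0, let Ω ⊂ ℝᵈ be a bounded open set, let v ∈ L¹(ℝᵈ) be nonnegative, and let u be a capacitory potential of v with constant κ. Then there is a constant C = C(Ω,d,α,κ) > 0, independent of v and u, such that ∫_Ω (1−u(x))² dx ≥ |Ω| − 2C Γ(v), where |Ω| is the Lebesgue measure of Ω and Γ(v) = ∫_{ℝᵈ} v(x)(1−u(x)) dx is the scattering length. -/

import Mathlib

open MeasureTheory ENNReal

/-- A measurable function `u : ℝᵈ → ℝ` is a capacitory potential of the nonnegative potential
`v` with constant `κ` if `0 ≤ u ≤ 1` everywhere and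
`u(x) = κ ∫ v(y) (1 - u(y)) ‖x - y‖ ^ (α - d) dy` for a.e. `x`. -/
def IsCapacitoryPotential (d : ℕ) (α κ : ℝ)
    (v u : EuclideanSpace ℝ (Fin d) → ℝ) : Prop :=
  Measurable u ∧ (∀ x, 0 ≤ u x ∧ u x ≤ 1) ∧
    ∀ᵐ x : EuclideanSpace ℝ (Fin d),
      u x = κ * ∫ y : EuclideanSpace ℝ (Fin d), v y * (1 - u y) * ‖x - y‖ ^ (α - d)

/-! Since `(1 - u)² ≥ 1 - 2u`, it suffices to bound `∫_Ω u`. Integrating the equation for `u`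
over `Ω` and exchanging the integrals (Tonelli) gives
`∫_Ω u ≤ κ Γ(v) sup_y ∫_Ω ‖x - y‖ ^ (α - d) dx`, and the supremum is finite: away from `y` the
kernel is at most `1`, and near `y` it is integrable because `α > 0`. -/

open Metric

theorem ofReal_integral_le_lintegral_ofReal {α : Type*} [MeasurableSpace α] {μ : Measure α}
    {f : α → ℝ} (hf : 0 ≤ᵐ[μ] f) :
    ENNReal.ofReal (∫ x, f x ∂μ) ≤ ∫⁻ x, ENNReal.ofReal (f x) ∂μ :=
  calc ENNReal.ofReal (∫ x, f x ∂μ) ≤ ‖∫ x, f x ∂μ‖ₑ := Real.ofReal_le_enorm _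
    _ ≤ ∫⁻ x, ‖f x‖ₑ ∂μ := enorm_integral_le_lintegral_enorm f
    _ = ∫⁻ x, ENNReal.ofReal (f x) ∂μ :=
      lintegral_congr_ae (hf.mono fun _ hx => Real.enorm_of_nonneg hx)

theorem lintegral_lintegral_mul_le_of_lintegral_le {α β : Type*} [MeasurableSpace α]
    [MeasurableSpace β] {μ : Measure α} {ν : Measure β} [SFinite μ] [SFinite ν]
    {g : β → ℝ≥0∞} {K : α → β → ℝ≥0∞} (hg : AEMeasurable g ν)
    (hK : Measurable (Function.uncurry K)) {M : ℝ≥0∞} (hM : ∀ y, ∫⁻ x, K x y ∂μ ≤ M) :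
    ∫⁻ x, ∫⁻ y, g y * K x y ∂ν ∂μ ≤ (∫⁻ y, g y ∂ν) * M := by
  rw [lintegral_lintegral_swap (hg.comp_snd.mul hK.aemeasurable), ← lintegral_mul_const'' M hg]
  refine lintegral_mono fun y => ?_
  rw [lintegral_const_mul _ hK.of_uncurry_right]
  gcongr
  exact hM y

theorem setIntegral_one_sub_sq_ge {α : Type*} [MeasurableSpace α] {μ : Measure α} {s : Set α}
    (hs : μ s ≠ ∞) {u : α → ℝ} (hu : AEStronglyMeasurable u μ)
    (hu_mem : ∀ x, 0 ≤ u x ∧ u x ≤ 1) :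
    μ.real s - 2 * ∫ x in s, u x ∂μ ≤ ∫ x in s, (1 - u x) ^ 2 ∂μ := by
  have : IsFiniteMeasure (μ.restrict s) := isFiniteMeasure_restrict.2 hs
  have hu_int : Integrable u (μ.restrict s) :=
    Integrable.of_bound hu.restrict 1 (ae_of_all _ fun x => by
      rw [Real.norm_of_nonneg (hu_mem x).1]; exact (hu_mem x).2)
  calc μ.real s - 2 * ∫ x in s, u x ∂μ = ∫ x in s, (1 - 2 * u x) ∂μ := by
        rw [integral_sub (integrable_const 1) (hu_int.const_mul 2), integral_const_mul,
          setIntegral_const, smul_eq_mul, mul_one]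
    _ ≤ ∫ x in s, (1 - u x) ^ 2 ∂μ := by
        refine integral_mono ((integrable_const 1).sub (hu_int.const_mul 2)) ?_ fun x => ?_
        · refine Integrable.of_bound ((aestronglyMeasurable_const.sub hu.restrict).pow 2) 1
            (ae_of_all _ fun x => ?_)
          rw [Real.norm_of_nonneg (sq_nonneg _)]
          nlinarith [hu_mem x]
        · nlinarith [sq_nonneg (u x)]

section RieszKernel

variable {E : Type*} [NormedAddCommGroup E] [MeasurableSpace E] [BorelSpace E]

noncomputable def rpowKernelBound (μ : Measure E) (c : ℝ) (s : Set E) : ℝ≥0∞ :=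
  μ s + ∫⁻ x in ball 0 1, ENNReal.ofReal (‖x‖ ^ c) ∂μ

theorem rpowKernelBound_ne_top [NormedSpace ℝ E] [FiniteDimensional ℝ E] {μ : Measure E}
    [μ.IsAddHaarMeasure] (hd : 1 ≤ Module.finrank ℝ E) {c : ℝ}
    (hc : -(Module.finrank ℝ E : ℝ) < c) {s : Set E} (hs : μ s ≠ ∞) :
    rpowKernelBound μ c s ≠ ∞ := by
  refine add_ne_top.2 ⟨hs, (Integrable.lintegral_lt_top ?_).ne⟩
  refine integrableOn_ball_of_norm_le_rpow hd (α := -c) (C := 1) (by linarith)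
    (ae_of_all _ fun x => ?_) (measurable_norm.pow_const c).aestronglyMeasurable
  rw [neg_neg, one_mul, Real.norm_of_nonneg (by positivity)]

-- Far from `y` the kernel is at most `1`; near `y` translate to `0`.
theorem setLIntegral_rpow_norm_sub_le {μ : Measure E} [μ.IsAddRightInvariant] {c : ℝ}
    (hc : c ≤ 0) (s : Set E) (y : E) :
    ∫⁻ x in s, ENNReal.ofReal (‖x - y‖ ^ c) ∂μ ≤ rpowKernelBound μ c s := by
  set F : E → ℝ≥0∞ := (ball 0 1).indicator fun z => ENNReal.ofReal (‖z‖ ^ c)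
  have hF (z : E) : ENNReal.ofReal (‖z‖ ^ c) ≤ 1 + F z := by
    by_cases hz : z ∈ ball (0 : E) 1
    · simp only [F, Set.indicator_of_mem hz]
      exact le_add_self
    · simp only [F, Set.indicator_of_notMem hz, add_zero]
      rw [mem_ball_zero_iff, not_lt] at hz
      exact ENNReal.ofReal_le_one.2 (Real.rpow_le_one_of_one_le_of_nonpos hz hc)
  calc ∫⁻ x in s, ENNReal.ofReal (‖x - y‖ ^ c) ∂μ
      ≤ ∫⁻ x in s, (1 + F (x - y)) ∂μ := lintegral_mono fun x => hF (x - y)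
    _ = μ s + ∫⁻ x in s, F (x - y) ∂μ := by
      rw [lintegral_add_left measurable_const, setLIntegral_one]
    _ ≤ μ s + ∫⁻ x, F (x - y) ∂μ := by
      gcongr
      exact Measure.restrict_le_self
    _ = rpowKernelBound μ c s := by
      rw [lintegral_sub_right_eq_self F y, lintegral_indicator measurableSet_ball]
      rfl

theorem setLIntegral_lintegral_mul_rpow_norm_sub_le [SecondCountableTopology E]
    {μ : Measure E} [SFinite μ] [μ.IsAddRightInvariant] {c : ℝ} (hc : c ≤ 0)
    {g : E → ℝ≥0∞} (hg : AEMeasurable g μ) (s : Set E) :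
    ∫⁻ x in s, ∫⁻ y, g y * ENNReal.ofReal (‖x - y‖ ^ c) ∂μ ∂μ ≤
      (∫⁻ y, g y ∂μ) * rpowKernelBound μ c s :=
  lintegral_lintegral_mul_le_of_lintegral_le hg (by fun_prop)
    (setLIntegral_rpow_norm_sub_le hc s)

end RieszKernel

namespace IsCapacitoryPotential

variable {d : ℕ} {α κ : ℝ} {v u : EuclideanSpace ℝ (Fin d) → ℝ}

theorem one_sub_nonneg (hu : IsCapacitoryPotential d α κ v u) (x : EuclideanSpace ℝ (Fin d)) :
    0 ≤ 1 - u x :=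
  sub_nonneg.2 (hu.2.1 x).2

theorem ae_ofReal_le_lintegral (hu : IsCapacitoryPotential d α κ v u) (hv : ∀ x, 0 ≤ v x) :
    ∀ᵐ x, ENNReal.ofReal (u x) ≤ ENNReal.ofReal κ *
      ∫⁻ y, ENNReal.ofReal (v y * (1 - u y)) * ENNReal.ofReal (‖x - y‖ ^ (α - d)) := by
  have hg (y : EuclideanSpace ℝ (Fin d)) : 0 ≤ v y * (1 - u y) :=
    mul_nonneg (hv y) (hu.one_sub_nonneg y)
  filter_upwards [hu.2.2] with x hx
  have hintegrand (y : EuclideanSpace ℝ (Fin d)) : 0 ≤ v y * (1 - u y) * ‖x - y‖ ^ (α - d) :=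
    mul_nonneg (hg y) (by positivity)
  rw [hx, ENNReal.ofReal_mul' (integral_nonneg hintegrand)]
  gcongr
  refine (ofReal_integral_le_lintegral_ofReal (ae_of_all _ hintegrand)).trans_eq ?_
  simp only [ENNReal.ofReal_mul (hg _)]

theorem setIntegral_le (hu : IsCapacitoryPotential d α κ v u) (hα0 : 0 < α) (hαd : α < d)
    (hκ : 0 ≤ κ) (hv : Integrable v) (hv0 : ∀ x, 0 ≤ v x) {s : Set (EuclideanSpace ℝ (Fin d))}
    (hs : volume s ≠ ∞) :
    ∫ x in s, u x ≤ κ * (rpowKernelBound volume (α - d) s).toReal * ∫ x, v x * (1 - u x) := by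
  set M := rpowKernelBound volume (α - d) s
  set g := fun y => v y * (1 - u y)
  have hM : M ≠ ∞ := by
    refine rpowKernelBound_ne_top ?_ ?_ hs <;> rw [finrank_euclideanSpace_fin]
    · exact Nat.one_le_iff_ne_zero.2 (by rintro rfl; norm_num at hαd; linarith)
    · linarith
  have hg0 (y : EuclideanSpace ℝ (Fin d)) : 0 ≤ g y := mul_nonneg (hv0 y) (hu.one_sub_nonneg y)
  have hg : Integrable g := hv.mul_bdd (c := 1)
    (aestronglyMeasurable_const.sub hu.1.aestronglyMeasurable) (ae_of_all _ fun y => by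
      rw [Real.norm_of_nonneg (hu.one_sub_nonneg y)]; linarith [(hu.2.1 y).1])
  have hΓ : ENNReal.ofReal (∫ y, g y) = ∫⁻ y, ENNReal.ofReal (g y) :=
    ofReal_integral_eq_lintegral_ofReal hg (ae_of_all _ hg0)
  have key : ENNReal.ofReal (∫ x in s, u x) ≤ ENNReal.ofReal (κ * M.toReal * ∫ y, g y) :=
    calc ENNReal.ofReal (∫ x in s, u x)
        ≤ ∫⁻ x in s, ENNReal.ofReal (u x) :=
          ofReal_integral_le_lintegral_ofReal (ae_of_all _ fun x => (hu.2.1 x).1)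
      _ ≤ ∫⁻ x in s, ENNReal.ofReal κ *
            ∫⁻ y, ENNReal.ofReal (g y) * ENNReal.ofReal (‖x - y‖ ^ (α - d)) :=
          lintegral_mono_ae (ae_restrict_of_ae (hu.ae_ofReal_le_lintegral hv0))
      _ = ENNReal.ofReal κ * ∫⁻ x in s,
            ∫⁻ y, ENNReal.ofReal (g y) * ENNReal.ofReal (‖x - y‖ ^ (α - d)) :=
          lintegral_const_mul' _ _ ofReal_ne_top
      _ ≤ ENNReal.ofReal κ * ((∫⁻ y, ENNReal.ofReal (g y)) * M) := by
          gcongr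
          exact setLIntegral_lintegral_mul_rpow_norm_sub_le (by linarith)
            hg.1.aemeasurable.ennreal_ofReal s
      _ = ENNReal.ofReal (κ * M.toReal * ∫ y, g y) := by
          rw [← hΓ, ENNReal.ofReal_mul (by positivity), ENNReal.ofReal_mul hκ,
            ofReal_toReal hM, mul_right_comm, mul_assoc]
  exact (ENNReal.ofReal_le_ofReal_iff
    (mul_nonneg (by positivity) (integral_nonneg hg0))).1 key

end IsCapacitoryPotential

theorem integral_one_sub_potential_sq_ge_general (d : ℕ) (α κ : ℝ)
    (hα0 : 0 < α) (hαd : α < d) (hκ : 0 < κ)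
    (Ω : Set (EuclideanSpace ℝ (Fin d)))
    (hΩb : Bornology.IsBounded Ω) :
    ∃ C > (0 : ℝ), ∀ v u : EuclideanSpace ℝ (Fin d) → ℝ,
      Integrable v → (∀ x, 0 ≤ v x) → IsCapacitoryPotential d α κ v u →
        (volume Ω).toReal - 2 * C * (∫ x : EuclideanSpace ℝ (Fin d), v x * (1 - u x)) ≤
          ∫ x in Ω, (1 - u x) ^ 2 := by
  have hΩ : volume Ω ≠ ∞ := hΩb.measure_lt_top.ne
  -- the `+ 1` only serves to make `C` positive
  refine ⟨κ * ((rpowKernelBound volume (α - d) Ω).toReal + 1), by positivity,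
    fun v u hv hv0 hu => ?_⟩
  have hΓ : 0 ≤ ∫ x, v x * (1 - u x) :=
    integral_nonneg fun x => mul_nonneg (hv0 x) (hu.one_sub_nonneg x)
  have hu_Ω := hu.setIntegral_le hα0 hαd hκ.le hv hv0 hΩ
  have hsq := setIntegral_one_sub_sq_ge hΩ hu.1.aestronglyMeasurable hu.2.1
  rw [measureReal_def] at hsq
  nlinarith [mul_nonneg hκ.le hΓ]

/-- For a bounded open set `Ω ⊂ ℝᵈ` there is a constant
`C = C(Ω,d,α,κ) > 0`, independent of `v` and `u`, such that
`∫_Ω (1-u)² ≥ |Ω| - 2C Γ(v)`, where `Γ(v) = ∫ v (1-u)`. -/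
theorem integral_one_sub_potential_sq_ge (d : ℕ) (hd : 1 ≤ d) (α κ : ℝ)
    (hα0 : 0 < α) (hα2 : α < 2) (hαd : α < d) (hκ : 0 < κ)
    (Ω : Set (EuclideanSpace ℝ (Fin d))) (hΩo : IsOpen Ω)
    (hΩb : Bornology.IsBounded Ω) :
    ∃ C > (0 : ℝ), ∀ v u : EuclideanSpace ℝ (Fin d) → ℝ,
      Integrable v → (∀ x, 0 ≤ v x) → IsCapacitoryPotential d α κ v u →
        (volume Ω).toReal - 2 * C * (∫ x : EuclideanSpace ℝ (Fin d), v x * (1 - u x)) ≤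
          ∫ x in Ω, (1 - u x) ^ 2 :=
  integral_one_sub_potential_sq_ge_general d α κ hα0 hαd hκ Ω hΩb
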